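/- arXiv:1911.05859 — 2 statements merged into one kernel-verified Lean document; each statement's English description precedes it below -/
import Mathlib

section
/- Let a, γ, b̃, σ²_w, τ_c, τ_f ∈ ℝ with γ > 0, b̃ > 0, σ²_w > 0. The equation obtained from setting the derivative of the steady-state variance to zero with exponential noise model R(τ) = b̃e^{−γτ} and constant delays has the unique solution τ_opt = (1/γ)[ln(γ²/4 − a²) + ln(b̃/σ²_w)], and τ_opt > 0 if and only if γ > 2√(σ²_w/b̃ + a²). -/
/-! With `D = γ²/4 - a²` and `c = σ_w/b̃`, the optimality equation reads `c e^{γτ} = D`, which for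
`c, D > 0` has the single solution `τ = log (D/c) / γ`. Hence `τ_opt > 0` iff `c < D`, that is
`σ_w/b̃ + a² < (γ/2)²`. -/

open Real

namespace Real

theorem mul_exp_mul_eq_iff {c D γ τ : ℝ} (hc : 0 < c) (hD : 0 < D) (hγ : γ ≠ 0) :
    c * exp (γ * τ) = D ↔ τ = (1 / γ) * (log D + log c⁻¹) := by
  rw [← log_mul hD.ne' (inv_pos.2 hc).ne', ← div_eq_mul_inv, mul_comm, ← eq_div_iff hc.ne',
    one_div, eq_inv_mul_iff_mul_eq₀ hγ, ← exp_eq_exp (x := γ * τ),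
    exp_log (div_pos hD hc)]

theorem inv_mul_log_add_log_inv_pos_iff {c D γ : ℝ} (hc : 0 < c) (hD : 0 < D) (hγ : 0 < γ) :
    0 < (1 / γ) * (log D + log c⁻¹) ↔ c < D := by
  rw [mul_pos_iff_of_pos_left (one_div_pos.2 hγ), ← log_mul hD.ne' (inv_pos.2 hc).ne',
    log_pos_iff (mul_pos hD (inv_pos.2 hc)).le, ← div_eq_mul_inv, one_lt_div hc]

theorem two_mul_sqrt_lt_iff {x γ : ℝ} (hγ : 0 < γ) : 2 * sqrt x < γ ↔ x < γ ^ 2 / 4 := by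
  rw [← lt_div_iff₀' two_pos, sqrt_lt' (half_pos hγ), div_pow]
  norm_num

end Real

theorem stmt7 (a γ btil σw : ℝ) (hγ : 0 < γ) (hb : 0 < btil) (hσ : 0 < σw)
    (hpos : a ^ 2 < γ ^ 2 / 4) :
    let τopt : ℝ := (1 / γ) * (Real.log (γ ^ 2 / 4 - a ^ 2) + Real.log (btil / σw))
    ((σw / btil) * Real.exp (γ * τopt) = γ ^ 2 / 4 - a ^ 2 ∧
      ∀ τ : ℝ, (σw / btil) * Real.exp (γ * τ) = γ ^ 2 / 4 - a ^ 2 → τ = τopt) ∧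
    (0 < τopt ↔ γ > 2 * Real.sqrt (σw / btil + a ^ 2)) := by
  intro τopt
  have hc : 0 < σw / btil := div_pos hσ hb
  have hD : 0 < γ ^ 2 / 4 - a ^ 2 := sub_pos.2 hpos
  have hτopt : τopt = (1 / γ) * (log (γ ^ 2 / 4 - a ^ 2) + log (σw / btil)⁻¹) := by
    rw [inv_div]
  have hsolve (τ : ℝ) := hτopt ▸ mul_exp_mul_eq_iff (τ := τ) hc hD hγ.ne'
  refine ⟨⟨(hsolve τopt).2 rfl, fun τ => (hsolve τ).1⟩, ?_⟩
  rw [hτopt, inv_mul_log_add_log_inv_pos_iff hc hD hγ, gt_iff_lt, two_mul_sqrt_lt_iff hγ,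
    lt_sub_iff_add_lt]
end

section
/- Let a < 0, σ²_w > 0, b̃ > 0, c ≥ 0, f ≥ 0, and fix τ > 0. Define g : ℕ_{≥1} → ℝ by g(N) = e^{2a(τ + c + fN)} p∞(τ, N) − (σ²_w/(2a))(1 − e^{2a(τ + c + fN)}), where p∞(τ, N) = (b/(Nc₀²τ))(a + √(a² + (Nc₀²σ²_w τ)/b)) for constants b, c₀ > 0. If f = 0 then g is nonincreasing in N; if f > 0 then g(N) → σ²_w/(2|a|) as N → ∞. -/
/-!
Rationalising, `p∞(τ, N) = σ²_w / (√(a² + t_N) - a)` with `t_N = N c₀² σ²_w τ / b`, which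
decreases as `t_N` grows and tends to `0`. For `f = 0` the delay factor `e^{2a(τ + c)}` is a
positive constant, so `g` inherits the monotonicity of `p∞`. For `f > 0` the factor
`e^{2a(τ + c + fN)}` tends to `0` as well, leaving `-σ²_w / (2a) = σ²_w / (2|a|)`.
-/

open Real Filter Topology Set

lemma lt_sqrt_sq_add (a : ℝ) {t : ℝ} (ht : 0 < t) : a < √(a ^ 2 + t) := by
  calc a ≤ |a| := le_abs_self a
    _ = √(a ^ 2) := (Real.sqrt_sq_eq_abs a).symm
    _ < √(a ^ 2 + t) := Real.sqrt_lt_sqrt (sq_nonneg a) (by linarith)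

lemma div_mul_add_sqrt_sq_add (σ a : ℝ) {t : ℝ} (ht : 0 < t) :
    σ / t * (a + √(a ^ 2 + t)) = σ / (√(a ^ 2 + t) - a) := by
  have hs : √(a ^ 2 + t) ^ 2 = a ^ 2 + t := Real.sq_sqrt (by positivity)
  rw [div_mul_eq_mul_div, div_eq_div_iff ht.ne' (sub_pos.2 (lt_sqrt_sq_add a ht)).ne']
  linear_combination σ * hs

lemma antitoneOn_div_sqrt_sq_add_sub {σ a : ℝ} (hσ : 0 ≤ σ) (ha : a < 0) :
    AntitoneOn (fun t => σ / (√(a ^ 2 + t) - a)) (Ici 0) := by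
  intro s _ t _ hst
  refine div_le_div_of_nonneg_left hσ (sub_pos.2 (ha.trans_le (Real.sqrt_nonneg _))) ?_
  gcongr

lemma tendsto_div_sqrt_sq_add_sub_atTop (σ a : ℝ) :
    Tendsto (fun t => σ / (√(a ^ 2 + t) - a)) atTop (𝓝 0) := by
  refine tendsto_const_nhds.div_atTop ?_
  simp_rw [sub_eq_add_neg]
  exact tendsto_atTop_add_const_right _ _
    (tendsto_sqrt_atTop.comp (tendsto_atTop_add_const_left _ _ tendsto_id))

lemma tendsto_exp_mul_const_add_mul_atTop {k c f : ℝ} (hk : k < 0) (hf : 0 < f) :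
    Tendsto (fun x => exp (k * (c + f * x))) atTop (𝓝 0) :=
  tendsto_exp_atBot.comp <| Tendsto.const_mul_atTop_of_neg hk <|
    tendsto_atTop_add_const_left _ c (tendsto_id.const_mul_atTop hf)

theorem stmt10_general (a σw b c0 c f τ : ℝ) (ha : a < 0) (hσ : 0 < σw) (hb : 0 < b)
    (hc0 : 0 < c0) (hτ : 0 < τ) :
    let pinf : ℕ → ℝ := fun N =>
      (b / (N * c0 ^ 2 * τ)) * (a + Real.sqrt (a ^ 2 + (N * c0 ^ 2 * σw * τ) / b))
    let g : ℕ → ℝ := fun N =>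
      Real.exp (2 * a * (τ + c + f * N)) * pinf N -
        (σw / (2 * a)) * (1 - Real.exp (2 * a * (τ + c + f * N)))
    (f = 0 → ∀ M N : ℕ, 1 ≤ M → M ≤ N → g N ≤ g M) ∧
    (0 < f → Tendsto g atTop (𝓝 (σw / (2 * |a|)))) := by
  intro pinf g
  have hpinf (N : ℕ) (hN : 1 ≤ N) :
      pinf N = σw / (√(a ^ 2 + N * c0 ^ 2 * σw * τ / b) - a) := by
    have hN' : (0 : ℝ) < N := by exact_mod_cast hN
    have hcoef : b / (N * c0 ^ 2 * τ) = σw / (N * c0 ^ 2 * σw * τ / b) := by field_simp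
    rw [← div_mul_add_sqrt_sq_add σw a (by positivity), ← hcoef]
  constructor
  · rintro rfl M N hM hMN
    have hp : pinf N ≤ pinf M := by
      rw [hpinf M hM, hpinf N (hM.trans hMN)]
      exact antitoneOn_div_sqrt_sq_add_sub hσ.le ha (by positivity : (0 : ℝ) ≤ _)
        (by positivity : (0 : ℝ) ≤ _) (by gcongr)
    simp only [g, zero_mul, add_zero]
    gcongr
  · intro hf
    have hexp := (tendsto_exp_mul_const_add_mul_atTop (k := 2 * a) (c := τ + c) (by linarith) hf).comp
      tendsto_natCast_atTop_atTop
    have ht : Tendsto (fun N : ℕ => (N : ℝ) * c0 ^ 2 * σw * τ / b) atTop atTop := by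
      simp_rw [mul_assoc, mul_div_assoc]
      exact tendsto_natCast_atTop_atTop.atTop_mul_const (by positivity)
    have hp : Tendsto pinf atTop (𝓝 0) :=
      ((tendsto_div_sqrt_sq_add_sub_atTop σw a).comp ht).congr' <|
        (eventually_ge_atTop 1).mono fun N hN => (hpinf N hN).symm
    have hlimit : σw / (2 * |a|) = 0 * 0 - σw / (2 * a) * (1 - 0) := by
      rw [abs_of_neg ha]
      field_simp
      ring
    rw [hlimit]
    exact (hexp.mul hp).sub ((tendsto_const_nhds.sub hexp).const_mul (σw / (2 * a)))

theorem stmt10 (a σw b c0 c f τ : ℝ) (ha : a < 0) (hσ : 0 < σw) (hb : 0 < b)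
    (hc0 : 0 < c0) (hc : 0 ≤ c) (hf : 0 ≤ f) (hτ : 0 < τ) :
    let pinf : ℕ → ℝ := fun N =>
      (b / (N * c0 ^ 2 * τ)) * (a + Real.sqrt (a ^ 2 + (N * c0 ^ 2 * σw * τ) / b))
    let g : ℕ → ℝ := fun N =>
      Real.exp (2 * a * (τ + c + f * N)) * pinf N -
        (σw / (2 * a)) * (1 - Real.exp (2 * a * (τ + c + f * N)))
    (f = 0 → ∀ M N : ℕ, 1 ≤ M → M ≤ N → g N ≤ g M) ∧
    (0 < f → Tendsto g atTop (𝓝 (σw / (2 * |a|)))) :=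
  stmt10_general a σw b c0 c f τ ha hσ hb hc0 hτ
end
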